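/- arXiv:1510.01844 — 3 statements merged into one kernel-verified Lean document; each statement's English description precedes it below -/
import Mathlib

section
/- Let P_X be a pmf on 𝒳 with P_X(x)>0 for all x, and let W be a channel from 𝒳 to 𝒴 such that P_Y = W P_X satisfies P_Y(y)>0 for all y. Then the contraction coefficients for KL divergence and χ²-divergence satisfy the linear bounds η_{χ²}(P_X,W) ≤ η_{KL}(P_X,W) ≤ η_{χ²}(P_X,W) / (min_{x∈𝒳} P_X(x)). -/
/-- A probability mass function on a finite set. -/
def IsPmf {𝒳 : Type*} [Fintype 𝒳] (P : 𝒳 → ℝ) : Prop :=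
  (∀ x, 0 ≤ P x) ∧ ∑ x, P x = 1

/-- A channel (column-stochastic matrix) from `𝒳` to `𝒴`: each column `W · x` is a pmf. -/
def IsChannel {𝒳 𝒴 : Type*} [Fintype 𝒳] [Fintype 𝒴] (W : 𝒴 → 𝒳 → ℝ) : Prop :=
  (∀ y x, 0 ≤ W y x) ∧ ∀ x, ∑ y, W y x = 1

/-- Action of a channel on a pmf: `(W P)(y) = ∑ₓ W(y|x) P(x)`. -/
def chanApply {𝒳 𝒴 : Type*} [Fintype 𝒳] (W : 𝒴 → 𝒳 → ℝ) (P : 𝒳 → ℝ) : 𝒴 → ℝ :=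
  fun y => ∑ x, W y x * P x

/-- KL divergence `D(R‖P) = ∑ₓ R(x) log(R(x)/P(x))`. -/
noncomputable def klDiv {𝒳 : Type*} [Fintype 𝒳] (R P : 𝒳 → ℝ) : ℝ :=
  ∑ x, R x * Real.log (R x / P x)

/-- χ²-divergence `χ²(R‖P) = ∑ₓ (R(x) − P(x))²/P(x)`. -/
noncomputable def chiSq {𝒳 : Type*} [Fintype 𝒳] (R P : 𝒳 → ℝ) : ℝ :=
  ∑ x, (R x - P x) ^ 2 / P x

/-- Contraction coefficient for KL divergence. -/
noncomputable def etaKL {𝒳 𝒴 : Type*} [Fintype 𝒳] [Fintype 𝒴]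
    (P : 𝒳 → ℝ) (W : 𝒴 → 𝒳 → ℝ) : ℝ :=
  sSup {r : ℝ | ∃ R : 𝒳 → ℝ, IsPmf R ∧ 0 < klDiv R P ∧
    r = klDiv (chanApply W R) (chanApply W P) / klDiv R P}

/-- Contraction coefficient for χ²-divergence. -/
noncomputable def etaChi {𝒳 𝒴 : Type*} [Fintype 𝒳] [Fintype 𝒴]
    (P : 𝒳 → ℝ) (W : 𝒴 → 𝒳 → ℝ) : ℝ :=
  sSup {r : ℝ | ∃ R : 𝒳 → ℝ, IsPmf R ∧ 0 < chiSq R P ∧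
    r = chiSq (chanApply W R) (chanApply W P) / chiSq R P}

open Real Set Filter Topology
open InformationTheory (klFun hasDerivAt_klFun klFun_one klFun_zero klFun_nonneg)

/-!
The lower bound is local. Along the mixture `R_ε = P + ε (R - P)`, the divergences `D(R_ε‖P)`
and `D(W R_ε‖W P)` are `ε² / 2` times `χ²(R‖P)` and `χ²(W R‖W P)` up to factors tending to `1`
as `ε → 0`, by the two-sided bound
`(t - 1)² / max t 1 ≤ 2 (t log t - t + 1) ≤ (t - 1)² / min t 1`.
Hence every χ²-ratio is a limit of KL-ratios.

The upper bound is the chain `D(W R‖W P) ≤ χ²(W R‖W P) ≤ η_χ² χ²(R‖P) ≤ η_χ² D(R‖P) / min P`,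
whose last step is `min P · χ²(R‖P) ≤ ‖R - P‖₂² ≤ ½ ‖R - P‖₁² ≤ D(R‖P)`: Pinsker's inequality,
reduced to two points by the log-sum inequality.

Both suprema are over bounded sets: the χ²-ratios are at most `1` by data processing, the
KL-ratios at most `1 / min P` by the chain above.
-/

theorem isMinOn_Icc_of_hasDerivAt {f f' : ℝ → ℝ} {a b c : ℝ} (hc : c ∈ Icc a b)
    (hf : ContinuousOn f (Icc a b)) (hf' : ∀ x ∈ Ioo a b, HasDerivAt f (f' x) x)
    (hleft : ∀ x ∈ Ioo a c, f' x ≤ 0) (hright : ∀ x ∈ Ioo c b, 0 ≤ f' x) :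
    IsMinOn f (Icc a b) c := by
  intro x hx
  rcases le_total x c with hxc | hcx
  · have hanti : AntitoneOn f (Icc a c) := by
      refine antitoneOn_of_hasDerivWithinAt_nonpos (f' := f') (convex_Icc a c)
        (hf.mono (Icc_subset_Icc_right hc.2)) (fun y hy => ?_) (fun y hy => ?_)
      · rw [interior_Icc] at hy
        exact (hf' y ⟨hy.1, hy.2.trans_le hc.2⟩).hasDerivWithinAt
      · rw [interior_Icc] at hy
        exact hleft y hy
    exact hanti ⟨hx.1, hxc⟩ ⟨hc.1, le_rfl⟩ hxc
  · have hmono : MonotoneOn f (Icc c b) := by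
      refine monotoneOn_of_hasDerivWithinAt_nonneg (f' := f') (convex_Icc c b)
        (hf.mono (Icc_subset_Icc_left hc.1)) (fun y hy => ?_) (fun y hy => ?_)
      · rw [interior_Icc] at hy
        exact (hf' y ⟨hc.1.trans_lt hy.1, hy.2⟩).hasDerivWithinAt
      · rw [interior_Icc] at hy
        exact hright y hy
    exact hmono ⟨le_rfl, hc.2⟩ ⟨hcx, hx.2⟩ hcx

theorem klFun_le_sq_sub_one {t : ℝ} (ht : 0 ≤ t) : klFun t ≤ (t - 1) ^ 2 := by
  rcases ht.eq_or_lt with rfl | ht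
  · simp [klFun_zero]
  rw [klFun]
  nlinarith [mul_le_mul_of_nonneg_left (log_le_sub_one_of_pos ht) ht.le]

theorem mul_klFun_div {a b : ℝ} (hb : b ≠ 0) :
    b * klFun (a / b) = a * log (a / b) + b - a := by
  rw [klFun]
  field_simp

theorem sq_sub_one_div_max_le_two_mul_klFun {t : ℝ} (ht : 0 ≤ t) :
    (t - 1) ^ 2 / max t 1 ≤ 2 * klFun t := by
  set b := max t 1
  have hb : 1 ≤ b := le_max_right t 1
  have hmin : IsMinOn (fun s => 2 * klFun s - (s - 1) ^ 2 / b) (Icc 0 b) 1 := by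
    refine isMinOn_Icc_of_hasDerivAt (f' := fun s => 2 * (log s - (s - 1) / b))
      ⟨zero_le_one, hb⟩ (by fun_prop) (fun s hs => ?_) (fun s hs => ?_) (fun s hs => ?_)
    · refine (((hasDerivAt_klFun hs.1.ne').const_mul 2).sub
        ((((hasDerivAt_id' s).sub_const 1).pow 2).div_const b)).congr_deriv ?_
      ring
    · have h1 := log_le_sub_one_of_pos hs.1
      have h2 : s - 1 ≤ (s - 1) / b := by
        rw [le_div_iff₀ (by linarith)]; nlinarith [hs.2]
      linarith
    · have h1 := one_sub_inv_le_log_of_pos (hs.1.trans' one_pos)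
      have h2 : (s - 1) / b ≤ 1 - s⁻¹ := by
        rw [div_le_iff₀ (by linarith)]
        have : 1 - s⁻¹ = (s - 1) / s := by field_simp [(show s ≠ 0 by linarith [hs.1])]
        rw [this, div_mul_eq_mul_div, le_div_iff₀ (by linarith [hs.1])]
        nlinarith [hs.1, hs.2]
      linarith
  have h := isMinOn_iff.1 hmin t ⟨ht, le_max_left t 1⟩
  simp only [klFun_one, sub_self, zero_pow two_ne_zero, zero_div, mul_zero] at h
  linarith

theorem two_mul_klFun_le_sq_sub_one_div_min {t : ℝ} (ht : 0 < t) :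
    2 * klFun t ≤ (t - 1) ^ 2 / min t 1 := by
  set a := min t 1
  have ha : 0 < a := lt_min ht one_pos
  have hmin : IsMinOn (fun s => (s - 1) ^ 2 / a - 2 * klFun s) (Icc a (max t 1)) 1 := by
    refine isMinOn_Icc_of_hasDerivAt (f' := fun s => 2 * ((s - 1) / a - log s))
      ⟨min_le_right t 1, le_max_right t 1⟩ (by fun_prop) (fun s hs => ?_) (fun s hs => ?_)
      (fun s hs => ?_)
    · refine (((((hasDerivAt_id' s).sub_const 1).pow 2).div_const a).sub
        ((hasDerivAt_klFun (ha.trans hs.1).ne').const_mul 2)).congr_deriv ?_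
      ring
    · have h1 := one_sub_inv_le_log_of_pos (ha.trans hs.1)
      have h2 : (s - 1) / a ≤ 1 - s⁻¹ := by
        have : 1 - s⁻¹ = (s - 1) / s := by field_simp [(show s ≠ 0 by linarith [hs.1])]
        rw [this, div_le_div_iff₀ ha (ha.trans hs.1)]
        nlinarith [hs.1, hs.2]
      linarith
    · have h1 := log_le_sub_one_of_pos (hs.1.trans' one_pos)
      have h2 : s - 1 ≤ (s - 1) / a := by
        rw [le_div_iff₀ ha]; nlinarith [min_le_right t 1, hs.1]
      linarith
  have h := isMinOn_iff.1 hmin t ⟨min_le_left t 1, le_max_left t 1⟩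
  simp only [klFun_one, sub_self, zero_pow two_ne_zero, zero_div, mul_zero] at h
  linarith

theorem two_mul_sq_le_binary_kl {q r : ℝ} (hq : q ∈ Ioo 0 1) (hr : r ∈ Icc 0 1) :
    2 * (r - q) ^ 2 ≤ r * log (r / q) + (1 - r) * log ((1 - r) / (1 - q)) := by
  have hq₀ : q ≠ 0 := hq.1.ne'
  have hq₁ : 1 - q ≠ 0 := by linarith [hq.2]
  -- Minimise over the second argument: since `s (1 - s) ≤ 1 / 4`, the derivative has the sign
  -- of `s - r`. The endpoints `r = 0, 1` then follow by continuity in `r`.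
  have hopen : ∀ r ∈ Ioo (0 : ℝ) 1,
      2 * (r - q) ^ 2 ≤ r * log (r / q) + (1 - r) * log ((1 - r) / (1 - q)) := by
    intro r hr
    have hr₀ : r ≠ 0 := hr.1.ne'
    have hr₁ : 1 - r ≠ 0 := by linarith [hr.2]
    have hderiv : ∀ s ∈ Ioo (0 : ℝ) 1, HasDerivAt
        (fun s => r * log (r / s) + (1 - r) * log ((1 - r) / (1 - s)) - 2 * (r - s) ^ 2)
        ((s - r) * (1 / (s * (1 - s)) - 4)) s := by
      intro s hs
      have hs₀ : s ≠ 0 := hs.1.ne'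
      have hs₁ : 1 - s ≠ 0 := by linarith [hs.2]
      refine (((((hasDerivAt_const s r).div (hasDerivAt_id' s) hs₀).log
        (div_ne_zero hr₀ hs₀)).const_mul r).add
        ((((hasDerivAt_const s (1 - r)).div ((hasDerivAt_id' s).const_sub 1) hs₁).log
          (div_ne_zero hr₁ hs₁)).const_mul (1 - r)) |>.sub
        ((((hasDerivAt_id' s).const_sub r).pow 2).const_mul 2)).congr_deriv ?_
      simp only [Pi.div_apply]
      field_simp
      ring
    have hfour : ∀ s ∈ Ioo (0 : ℝ) 1, 0 ≤ 1 / (s * (1 - s)) - 4 := by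
      intro s hs
      rw [sub_nonneg, le_div_iff₀ (mul_pos hs.1 (sub_pos.2 hs.2))]
      nlinarith [sq_nonneg (2 * s - 1)]
    have hsub : Icc (min r q) (max r q) ⊆ Ioo 0 1 := fun s hs =>
      ⟨(lt_min hr.1 hq.1).trans_le hs.1, hs.2.trans_lt (max_lt hr.2 hq.2)⟩
    have hmin := isMinOn_Icc_of_hasDerivAt ⟨min_le_left r q, le_max_left r q⟩
      (fun s hs => (hderiv s (hsub hs)).continuousAt.continuousWithinAt)
      (fun s hs => hderiv s (hsub (Ioo_subset_Icc_self hs)))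
      (fun s hs => mul_nonpos_of_nonpos_of_nonneg (by linarith [hs.2])
        (hfour s (hsub (Ioo_subset_Icc_self ⟨hs.1, hs.2.trans_le (le_max_left r q)⟩))))
      (fun s hs => mul_nonneg (by linarith [hs.1])
        (hfour s (hsub (Ioo_subset_Icc_self ⟨(min_le_left r q).trans_lt hs.1, hs.2⟩))))
      ⟨min_le_right r q, le_max_right r q⟩
    simp only [mem_ofPred_eq, div_self hr₀, div_self hr₁, log_one, sub_self] at hmin
    linarith
  have hcont : ∀ c : ℝ, c ≠ 0 → Continuous fun x : ℝ => x * log (x / c) := by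
    intro c hc
    convert (continuous_mul_log.comp (continuous_id.div_const c)).const_mul c using 2 with x
    simp only [Function.comp_apply, id]
    field_simp
  have hclosed : IsClosed
      {r : ℝ | 2 * (r - q) ^ 2 ≤ r * log (r / q) + (1 - r) * log ((1 - r) / (1 - q))} :=
    isClosed_le (by fun_prop)
      ((hcont q hq₀).add ((hcont (1 - q) hq₁).comp (continuous_const.sub continuous_id)))
  rw [← closure_Ioo zero_ne_one] at hr
  exact hclosed.closure_subset_iff.2 hopen hr

theorem mul_log_add_sub_le_mul_log_div {a b m : ℝ} (ha : 0 ≤ a) (hb : 0 < b) (hm : 0 < m) :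
    a * log m + a - m * b ≤ a * log (a / b) := by
  rcases ha.eq_or_lt with rfl | ha
  · simp only [zero_mul, add_zero, zero_sub, zero_div, log_zero, mul_zero, neg_nonpos]
    positivity
  have h := klFun_nonneg (div_nonneg ha.le (mul_pos hb hm).le)
  rw [← mul_nonneg_iff_of_pos_left (mul_pos hb hm), mul_klFun_div (mul_pos hb hm).ne',
    ← div_div, log_div (div_pos ha hb).ne' hm.ne'] at h
  nlinarith

theorem Finset.sum_mul_log_div_sum_le {ι : Type*} (s : Finset ι) {a b : ι → ℝ}
    (ha : ∀ i ∈ s, 0 ≤ a i) (hb : ∀ i ∈ s, 0 < b i) :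
    (∑ i ∈ s, a i) * log ((∑ i ∈ s, a i) / ∑ i ∈ s, b i) ≤ ∑ i ∈ s, a i * log (a i / b i) := by
  rcases (Finset.sum_nonneg ha).eq_or_lt with hA | hA
  · rw [← hA, zero_mul]
    refine Finset.sum_nonneg fun i hi => ?_
    simp [(Finset.sum_eq_zero_iff_of_nonneg ha).1 hA.symm i hi]
  have hB : 0 < ∑ i ∈ s, b i := Finset.sum_pos (fun i hi => hb i hi)
    (Finset.nonempty_of_sum_ne_zero hA.ne')
  set m := (∑ i ∈ s, a i) / ∑ i ∈ s, b i
  calc (∑ i ∈ s, a i) * log m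
      = ∑ i ∈ s, (a i * log m + a i - m * b i) := by
        rw [Finset.sum_sub_distrib, Finset.sum_add_distrib, ← Finset.sum_mul, ← Finset.mul_sum,
          div_mul_cancel₀ _ hB.ne']
        ring
    _ ≤ ∑ i ∈ s, a i * log (a i / b i) := Finset.sum_le_sum fun i hi =>
        mul_log_add_sub_le_mul_log_div (ha i hi) (hb i hi) (div_pos hA hB)

section Divergences

variable {ι : Type*} [Fintype ι] {A B : ι → ℝ}

theorem klDiv_eq_sum_mul_klFun (hB : ∀ i, 0 < B i) (hAB : ∑ i, A i = ∑ i, B i) :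
    klDiv A B = ∑ i, B i * klFun (A i / B i) := by
  simp only [mul_klFun_div (hB _).ne', Finset.sum_sub_distrib, Finset.sum_add_distrib, hAB, klDiv]
  ring

theorem klDiv_nonneg (hA : ∀ i, 0 ≤ A i) (hB : ∀ i, 0 < B i) (hAB : ∑ i, A i = ∑ i, B i) :
    0 ≤ klDiv A B := by
  rw [klDiv_eq_sum_mul_klFun hB hAB]
  exact Finset.sum_nonneg fun i _ =>
    mul_nonneg (hB i).le (klFun_nonneg (div_nonneg (hA i) (hB i).le))

theorem klDiv_le_chiSq (hA : ∀ i, 0 ≤ A i) (hB : ∀ i, 0 < B i) (hAB : ∑ i, A i = ∑ i, B i) :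
    klDiv A B ≤ chiSq A B := by
  rw [klDiv_eq_sum_mul_klFun hB hAB]
  refine Finset.sum_le_sum fun i _ => ?_
  calc B i * klFun (A i / B i) ≤ B i * (A i / B i - 1) ^ 2 :=
        mul_le_mul_of_nonneg_left (klFun_le_sq_sub_one (div_nonneg (hA i) (hB i).le)) (hB i).le
    _ = (A i - B i) ^ 2 / B i := by field_simp [(hB i).ne']

theorem sum_sq_div_max_le_two_mul_klDiv (hA : ∀ i, 0 ≤ A i) (hB : ∀ i, 0 < B i)
    (hAB : ∑ i, A i = ∑ i, B i) :
    ∑ i, (A i - B i) ^ 2 / max (A i) (B i) ≤ 2 * klDiv A B := by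
  rw [klDiv_eq_sum_mul_klFun hB hAB, Finset.mul_sum]
  refine Finset.sum_le_sum fun i _ => ?_
  have hBi := (hB i).ne'
  calc (A i - B i) ^ 2 / max (A i) (B i)
      = B i * ((A i / B i - 1) ^ 2 / max (A i / B i) 1) := by
        rw [← div_self hBi, max_div_div_right (hB i).le]
        field_simp
    _ ≤ B i * (2 * klFun (A i / B i)) := mul_le_mul_of_nonneg_left
        (sq_sub_one_div_max_le_two_mul_klFun (div_nonneg (hA i) (hB i).le)) (hB i).le
    _ = 2 * (B i * klFun (A i / B i)) := by ring

theorem two_mul_klDiv_le_sum_sq_div_min (hA : ∀ i, 0 < A i) (hB : ∀ i, 0 < B i)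
    (hAB : ∑ i, A i = ∑ i, B i) :
    2 * klDiv A B ≤ ∑ i, (A i - B i) ^ 2 / min (A i) (B i) := by
  rw [klDiv_eq_sum_mul_klFun hB hAB, Finset.mul_sum]
  refine Finset.sum_le_sum fun i _ => ?_
  have hBi := (hB i).ne'
  calc 2 * (B i * klFun (A i / B i)) = B i * (2 * klFun (A i / B i)) := by ring
    _ ≤ B i * ((A i / B i - 1) ^ 2 / min (A i / B i) 1) := mul_le_mul_of_nonneg_left
        (two_mul_klFun_le_sq_sub_one_div_min (div_pos (hA i) (hB i))) (hB i).le
    _ = (A i - B i) ^ 2 / min (A i) (B i) := by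
        rw [← div_self hBi, min_div_div_right (hB i).le]
        field_simp

theorem chiSq_nonneg (hB : ∀ i, 0 ≤ B i) : 0 ≤ chiSq A B :=
  Finset.sum_nonneg fun i _ => div_nonneg (sq_nonneg _) (hB i)

theorem chiSq_add_mul_sub (A B : ι → ℝ) (ε : ℝ) :
    chiSq (fun i => B i + ε * (A i - B i)) B = ε ^ 2 * chiSq A B := by
  simp only [chiSq, Finset.mul_sum, add_sub_cancel_left, mul_pow, mul_div_assoc]

end Divergences

theorem Finset.sum_sq_le_two_mul_sq_sum {ι : Type*} [Fintype ι] (s : Finset ι) {d : ι → ℝ}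
    (hs : ∀ i ∈ s, 0 ≤ d i) (hsc : ∀ i ∉ s, d i ≤ 0) (hd : ∑ i, d i = 0) :
    ∑ i, d i ^ 2 ≤ 2 * (∑ i ∈ s, d i) ^ 2 := by
  classical
  have hin := Finset.sum_sq_le_sq_sum_of_nonneg hs
  have hout := Finset.sum_sq_le_sq_sum_of_nonneg (s := sᶜ) (f := fun i => -d i)
    fun i hi => neg_nonneg.2 (hsc i (Finset.mem_compl.1 hi))
  have hcompl : ∑ i ∈ sᶜ, d i = -∑ i ∈ s, d i := by linarith [s.sum_add_sum_compl d]
  simp only [neg_sq, Finset.sum_neg_distrib, hcompl, neg_neg] at hout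
  rw [← s.sum_add_sum_compl]
  linarith

section Pinsker

variable {ι : Type*} [Fintype ι] {R P : ι → ℝ}

theorem sum_sq_sub_le_klDiv (hR : IsPmf R) (hP : IsPmf P) (hPpos : ∀ i, 0 < P i) :
    ∑ i, (R i - P i) ^ 2 ≤ klDiv R P := by
  classical
  set s := Finset.univ.filter fun i => P i < R i
  set r := ∑ i ∈ s, R i
  set q := ∑ i ∈ s, P i
  have hcompR : ∑ i ∈ sᶜ, R i = 1 - r := by linarith [s.sum_add_sum_compl R, hR.2]
  have hcompP : ∑ i ∈ sᶜ, P i = 1 - q := by linarith [s.sum_add_sum_compl P, hP.2]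
  have hbinary : r * log (r / q) + (1 - r) * log ((1 - r) / (1 - q)) ≤ klDiv R P := by
    rw [klDiv, ← s.sum_add_sum_compl, ← hcompR, ← hcompP]
    exact add_le_add (s.sum_mul_log_div_sum_le (fun i _ => hR.1 i) (fun i _ => hPpos i))
      (sᶜ.sum_mul_log_div_sum_le (fun i _ => hR.1 i) (fun i _ => hPpos i))
  have hsq : ∑ i, (R i - P i) ^ 2 ≤ 2 * (r - q) ^ 2 := by
    rw [← Finset.sum_sub_distrib]
    refine s.sum_sq_le_two_mul_sq_sum (fun i hi => ?_) (fun i hi => ?_) ?_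
    · exact sub_nonneg.2 (Finset.mem_filter.1 hi).2.le
    · simpa [s] using hi
    · rw [Finset.sum_sub_distrib, hR.2, hP.2, sub_self]
  refine hsq.trans ?_
  rcases s.eq_empty_or_nonempty with hs | hs
  · simpa [r, q, hs] using klDiv_nonneg hR.1 hPpos (by rw [hR.2, hP.2])
  have hq : 0 < q := Finset.sum_pos (fun i _ => hPpos i) hs
  have hqr : q < r := by
    rw [← sub_pos, ← Finset.sum_sub_distrib]
    exact Finset.sum_pos (fun i hi => sub_pos.2 (Finset.mem_filter.1 hi).2) hs
  have hr : r ≤ 1 := by linarith [Finset.sum_nonneg fun i (_ : i ∈ sᶜ) => hR.1 i]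
  exact (two_mul_sq_le_binary_kl ⟨hq, by linarith⟩ ⟨hq.le.trans hqr.le, hr⟩).trans hbinary

theorem mul_chiSq_le_klDiv (hR : IsPmf R) (hP : IsPmf P) (hPpos : ∀ i, 0 < P i) {p : ℝ}
    (hp : ∀ i, p ≤ P i) : p * chiSq R P ≤ klDiv R P := by
  refine le_trans ?_ (sum_sq_sub_le_klDiv hR hP hPpos)
  rw [chiSq, Finset.mul_sum]
  refine Finset.sum_le_sum fun i _ => ?_
  rw [mul_div_assoc']
  exact div_le_of_le_mul₀ (hPpos i).le (sq_nonneg _)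
    (by nlinarith [sq_nonneg (R i - P i), hp i])

end Pinsker

section Channel

variable {𝒳 𝒴 : Type*} [Fintype 𝒳] {W : 𝒴 → 𝒳 → ℝ}

theorem sum_chanApply [Fintype 𝒴] (hW : IsChannel W) (A : 𝒳 → ℝ) :
    ∑ y, chanApply W A y = ∑ x, A x := by
  simp only [chanApply]
  rw [Finset.sum_comm]
  simp [← Finset.sum_mul, hW.2]

theorem IsPmf.chanApply [Fintype 𝒴] (hW : IsChannel W) {A : 𝒳 → ℝ} (hA : IsPmf A) :
    IsPmf (chanApply W A) :=
  ⟨fun y => Finset.sum_nonneg fun x _ => mul_nonneg (hW.1 y x) (hA.1 x),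
    (sum_chanApply hW A).trans hA.2⟩

theorem chanApply_add_mul_sub (A B : 𝒳 → ℝ) (ε : ℝ) :
    chanApply W (fun x => B x + ε * (A x - B x)) =
      fun y => chanApply W B y + ε * (chanApply W A y - chanApply W B y) := by
  ext y
  simp only [chanApply, Finset.mul_sum, ← Finset.sum_sub_distrib, ← Finset.sum_add_distrib]
  exact Finset.sum_congr rfl fun x _ => by ring

theorem chiSq_chanApply_le [Fintype 𝒴] (hW : IsChannel W) {A B : 𝒳 → ℝ} (hB : ∀ x, 0 < B x)
    (hWB : ∀ y, 0 < chanApply W B y) :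
    chiSq (chanApply W A) (chanApply W B) ≤ chiSq A B := by
  -- Cauchy–Schwarz in each output coordinate, with weights `W y x`.
  have hrow : ∀ y, (chanApply W A y - chanApply W B y) ^ 2 / chanApply W B y ≤
      ∑ x, W y x * ((A x - B x) ^ 2 / B x) := by
    intro y
    rw [div_le_iff₀ (hWB y)]
    have hdiff : chanApply W A y - chanApply W B y = ∑ x, W y x * (A x - B x) := by
      simp only [chanApply, ← Finset.sum_sub_distrib, mul_sub]
    rw [hdiff]
    refine Finset.sum_sq_le_sum_mul_sum_of_sq_le_mul _
      (fun x _ => mul_nonneg (hW.1 y x) (div_nonneg (sq_nonneg _) (hB x).le))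
      (fun x _ => mul_nonneg (hW.1 y x) (hB x).le) fun x _ => le_of_eq ?_
    field_simp [(hB x).ne']
  calc chiSq (chanApply W A) (chanApply W B) ≤ ∑ y, ∑ x, W y x * ((A x - B x) ^ 2 / B x) :=
        Finset.sum_le_sum fun y _ => hrow y
    _ = chiSq A B := by
        rw [Finset.sum_comm]
        simp [← Finset.sum_mul, hW.2, chiSq]

end Channel

section Contraction

variable {𝒳 𝒴 : Type*} [Fintype 𝒳] [Fintype 𝒴] {P : 𝒳 → ℝ} {W : 𝒴 → 𝒳 → ℝ}

def klRatios (P : 𝒳 → ℝ) (W : 𝒴 → 𝒳 → ℝ) : Set ℝ :=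
  {r : ℝ | ∃ R : 𝒳 → ℝ, IsPmf R ∧ 0 < klDiv R P ∧
    r = klDiv (chanApply W R) (chanApply W P) / klDiv R P}

def chiRatios (P : 𝒳 → ℝ) (W : 𝒴 → 𝒳 → ℝ) : Set ℝ :=
  {r : ℝ | ∃ R : 𝒳 → ℝ, IsPmf R ∧ 0 < chiSq R P ∧
    r = chiSq (chanApply W R) (chanApply W P) / chiSq R P}

theorem etaKL_nonneg (hP : IsPmf P) (hW : IsChannel W) (hPY : ∀ y, 0 < chanApply W P y) :
    0 ≤ etaKL P W :=
  Real.sSup_nonneg fun _ ⟨_, hR, hD, hr⟩ => hr ▸ div_nonneg (klDiv_nonneg (hR.chanApply hW).1 hPY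
    ((hR.chanApply hW).2.trans (hP.chanApply hW).2.symm)) hD.le

theorem etaChi_nonneg (hPY : ∀ y, 0 < chanApply W P y) : 0 ≤ etaChi P W :=
  Real.sSup_nonneg fun _ ⟨_, _, hχ, hr⟩ => hr ▸ div_nonneg (chiSq_nonneg fun y => (hPY y).le) hχ.le

theorem bddAbove_chiRatios (hPpos : ∀ x, 0 < P x) (hW : IsChannel W)
    (hPY : ∀ y, 0 < chanApply W P y) : BddAbove (chiRatios P W) :=
  ⟨1, fun _ ⟨_, _, hχ, hr⟩ => hr ▸ (div_le_one hχ).2 (chiSq_chanApply_le hW hPpos hPY)⟩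

theorem le_etaChi_div_of_mem_klRatios (hP : IsPmf P) (hPpos : ∀ x, 0 < P x) (hW : IsChannel W)
    (hPY : ∀ y, 0 < chanApply W P y) {p : ℝ} (hp : 0 < p) (hpP : ∀ x, p ≤ P x) {r : ℝ}
    (hr : r ∈ klRatios P W) : r ≤ etaChi P W / p := by
  obtain ⟨R, hR, hD, rfl⟩ := hr
  have hχ : 0 < chiSq R P := hD.trans_le (klDiv_le_chiSq hR.1 hPpos (hR.2.trans hP.2.symm))
  have hratio : chiSq (chanApply W R) (chanApply W P) / chiSq R P ≤ etaChi P W :=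
    le_csSup (bddAbove_chiRatios hPpos hW hPY) ⟨R, hR, hχ, rfl⟩
  calc klDiv (chanApply W R) (chanApply W P) / klDiv R P
      ≤ chiSq (chanApply W R) (chanApply W P) / (p * chiSq R P) :=
        div_le_div₀ (chiSq_nonneg fun y => (hPY y).le)
          (klDiv_le_chiSq (hR.chanApply hW).1 hPY
            ((hR.chanApply hW).2.trans (hP.chanApply hW).2.symm))
          (by positivity) (mul_chiSq_le_klDiv hR hP hPpos hpP)
    _ = chiSq (chanApply W R) (chanApply W P) / chiSq R P / p := by rw [div_div, mul_comm]
    _ ≤ etaChi P W / p := by gcongr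

theorem etaKL_le_etaChi_div (hP : IsPmf P) (hPpos : ∀ x, 0 < P x) (hW : IsChannel W)
    (hPY : ∀ y, 0 < chanApply W P y) {p : ℝ} (hp : 0 < p) (hpP : ∀ x, p ≤ P x) :
    etaKL P W ≤ etaChi P W / p :=
  Real.sSup_le (fun _ hr => le_etaChi_div_of_mem_klRatios hP hPpos hW hPY hp hpP hr)
    (div_nonneg (etaChi_nonneg hPY) hp.le)

theorem IsPmf.add_mul_sub {R P : 𝒳 → ℝ} (hR : IsPmf R) (hP : IsPmf P) {ε : ℝ}
    (hε : ε ∈ Icc 0 1) : IsPmf fun x => P x + ε * (R x - P x) :=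
  ⟨fun x => by nlinarith [hR.1 x, hP.1 x, hε.1, hε.2], by
    simp [Finset.sum_add_distrib, ← Finset.mul_sum, Finset.sum_sub_distrib, hR.2, hP.2]⟩

theorem div_le_klDiv_add_mul_sub_div (hP : IsPmf P) (hPpos : ∀ x, 0 < P x) (hW : IsChannel W)
    (hPY : ∀ y, 0 < chanApply W P y) {R : 𝒳 → ℝ} (hR : IsPmf R) {ε : ℝ} (hε : ε ∈ Ioo 0 1)
    (hD : 0 < klDiv (fun x => P x + ε * (R x - P x)) P) :
    (∑ y, (chanApply W R y - chanApply W P y) ^ 2 /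
        max (chanApply W P y + ε * (chanApply W R y - chanApply W P y)) (chanApply W P y)) /
      (∑ x, (R x - P x) ^ 2 / min (P x + ε * (R x - P x)) (P x)) ≤
    klDiv (chanApply W fun x => P x + ε * (R x - P x)) (chanApply W P) /
      klDiv (fun x => P x + ε * (R x - P x)) P := by
  have hRε := hR.add_mul_sub hP (Ioo_subset_Icc_self hε)
  have hRεpos : ∀ x, 0 < P x + ε * (R x - P x) := fun x => by
    nlinarith [hR.1 x, hPpos x, hε.1, hε.2]
  have hsumY := (hRε.chanApply hW).2.trans (hP.chanApply hW).2.symm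
  have hnum := sum_sq_div_max_le_two_mul_klDiv (hRε.chanApply hW).1 hPY hsumY
  have hden := two_mul_klDiv_le_sum_sq_div_min hRεpos hPpos (hRε.2.trans hP.2.symm)
  have hN := klDiv_nonneg (hRε.chanApply hW).1 hPY hsumY
  rw [chanApply_add_mul_sub] at hnum hN ⊢
  simp only [add_sub_cancel_left, mul_pow, mul_div_assoc, ← Finset.mul_sum] at hnum hden
  calc _ = (ε ^ 2 * _) / (ε ^ 2 * _) := (mul_div_mul_left _ _ (pow_ne_zero 2 hε.1.ne')).symm
    _ ≤ (2 * _) / (2 * _) :=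
        div_le_div₀ (by positivity) hnum (by positivity) hden
    _ = _ := mul_div_mul_left _ _ two_ne_zero

theorem le_etaKL_of_mem_chiRatios (hP : IsPmf P) (hPpos : ∀ x, 0 < P x) (hW : IsChannel W)
    (hPY : ∀ y, 0 < chanApply W P y) {p : ℝ} (hp : 0 < p) (hpP : ∀ x, p ≤ P x) {r : ℝ}
    (hr : r ∈ chiRatios P W) : r ≤ etaKL P W := by
  obtain ⟨R, hR, hχ, rfl⟩ := hr
  let lower : ℝ → ℝ := fun ε => ∑ y, (chanApply W R y - chanApply W P y) ^ 2 /
    max (chanApply W P y + ε * (chanApply W R y - chanApply W P y)) (chanApply W P y)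
  let upper : ℝ → ℝ := fun ε => ∑ x, (R x - P x) ^ 2 / min (P x + ε * (R x - P x)) (P x)
  have hlim : Tendsto (fun ε => lower ε / upper ε) (𝓝[>] 0)
      (𝓝 (chiSq (chanApply W R) (chanApply W P) / chiSq R P)) := by
    have h0 : lower 0 / upper 0 = chiSq (chanApply W R) (chanApply W P) / chiSq R P := by
      simp [lower, upper, chiSq]
    have hcont : ContinuousAt (fun ε => lower ε / upper ε) 0 := by
      refine ContinuousAt.div ?_ ?_ (by simpa [upper, chiSq] using hχ.ne')
      · exact (continuous_finsetSum _ fun y _ => continuous_const.div (by fun_prop)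
          fun ε => (lt_max_of_lt_right (hPY y)).ne').continuousAt
      · exact tendsto_finsetSum _ fun x _ => continuousAt_const.div (by fun_prop)
          (by simpa using (hPpos x).ne')
    exact h0 ▸ hcont.tendsto.mono_left nhdsWithin_le_nhds
  refine le_of_tendsto hlim ?_
  filter_upwards [Ioo_mem_nhdsGT one_pos] with ε hε
  have hRε := hR.add_mul_sub hP (Ioo_subset_Icc_self hε)
  have hD : 0 < klDiv (fun x => P x + ε * (R x - P x)) P := by
    refine lt_of_lt_of_le ?_ (mul_chiSq_le_klDiv hRε hP hPpos hpP)
    rw [chiSq_add_mul_sub]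
    have := hε.1
    positivity
  exact (div_le_klDiv_add_mul_sub_div hP hPpos hW hPY hR hε hD).trans <|
    le_csSup ⟨_, fun _ hr => le_etaChi_div_of_mem_klRatios hP hPpos hW hPY hp hpP hr⟩
      ⟨_, hRε, hD, rfl⟩

theorem etaChi_le_etaKL (hP : IsPmf P) (hPpos : ∀ x, 0 < P x) (hW : IsChannel W)
    (hPY : ∀ y, 0 < chanApply W P y) {p : ℝ} (hp : 0 < p) (hpP : ∀ x, p ≤ P x) :
    etaChi P W ≤ etaKL P W :=
  Real.sSup_le (fun _ hr => le_etaKL_of_mem_chiRatios hP hPpos hW hPY hp hpP hr)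
    (etaKL_nonneg hP hW hPY)

end Contraction

theorem contraction_coefficient_bound_general
    {𝒳 𝒴 : Type*} [Fintype 𝒳] [Fintype 𝒴] [Nonempty 𝒳]
    (PX : 𝒳 → ℝ) (W : 𝒴 → 𝒳 → ℝ)
    (hPX : IsPmf PX) (hPXpos : ∀ x, 0 < PX x)
    (hW : IsChannel W) (hPY : ∀ y, 0 < chanApply W PX y) :
    etaChi PX W ≤ etaKL PX W ∧
      etaKL PX W ≤ etaChi PX W / Finset.univ.inf' Finset.univ_nonempty PX := by
  have hp : 0 < Finset.univ.inf' Finset.univ_nonempty PX :=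
    (Finset.lt_inf'_iff _).2 fun x _ => hPXpos x
  have hpP : ∀ x, Finset.univ.inf' Finset.univ_nonempty PX ≤ PX x :=
    fun x => Finset.inf'_le _ (Finset.mem_univ x)
  exact ⟨etaChi_le_etaKL hPX hPXpos hW hPY hp hpP, etaKL_le_etaChi_div hPX hPXpos hW hPY hp hpP⟩

/-- **Theorem 2 (Contraction Coefficient Bound).**
`η_{χ²}(P_X,W) ≤ η_{KL}(P_X,W) ≤ η_{χ²}(P_X,W) / min_x P_X(x)`. -/
theorem contraction_coefficient_bound
    {𝒳 𝒴 : Type*} [Fintype 𝒳] [Fintype 𝒴] [Nonempty 𝒳]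
    (hcardX : 2 ≤ Fintype.card 𝒳) (hcardY : 2 ≤ Fintype.card 𝒴)
    (PX : 𝒳 → ℝ) (W : 𝒴 → 𝒳 → ℝ)
    (hPX : IsPmf PX) (hPXpos : ∀ x, 0 < PX x)
    (hW : IsChannel W) (hPY : ∀ y, 0 < chanApply W PX y) :
    etaChi PX W ≤ etaKL PX W ∧
      etaKL PX W ≤ etaChi PX W / Finset.univ.inf' Finset.univ_nonempty PX :=
  contraction_coefficient_bound_general PX W hPX hPXpos hW hPY
end

section
/- (KL divergence refined lower bound.) Let P be a pmf on 𝒳 with P(x)>0 for all x, and let R be a pmf on 𝒳 with R ≠ P. Let J(x)=R(x)−P(x). Then D(R||P) / ( χ²(R||P) · ‖J‖₁ ) ≥ φ( max_{A⊆𝒳} min{P(A), 1−P(A)} ) / ( 4 · max_{x∈𝒳} |J(x)/P(x)| ), where ‖J‖₁ = Σ_x |J(x)| and P(A)=Σ_{x∈A}P(x). -/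
/-- The function `φ(p) = (1/(1−2p)) log((1−p)/p)` for `p ∈ [0,1/2)`, with `φ(1/2) = 2`. -/
noncomputable def phiFun (p : ℝ) : ℝ :=
  if p = 1 / 2 then 2 else (1 / (1 - 2 * p)) * Real.log ((1 - p) / p)

/-- `max_{A ⊆ 𝒳} min{P(A), 1 − P(A)}` where `P(A) = ∑_{x∈A} P(x)`. -/
noncomputable def balSep {𝒳 : Type*} [Fintype 𝒳] (P : 𝒳 → ℝ) : ℝ :=
  (Finset.univ : Finset 𝒳).powerset.sup' (Finset.powerset_nonempty _)
    (fun A => min (∑ x ∈ A, P x) (1 - ∑ x ∈ A, P x))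

/-!
The set `A = {x | P x < R x}` reduces everything to two points: by the log-sum inequality
`D(R‖P) ≥ d(R(A)‖P(A))` for the binary divergence `d`, while `‖J‖₁ = 2 (R(A) - P(A))` and
`χ²(R‖P) ≤ max |J/P| · ‖J‖₁`. It remains to prove the refined Pinsker inequality
`d(p‖q) ≥ φ(β) (p - q)²` for `min(q, 1 - q) ≤ β ≤ 1/2`.

By the symmetry `d(p‖q) = d(1 - p‖1 - q)` we may take `q ≤ β`. Since `2 φ(q)` is the slope of
`logit x = log x - log (1 - x)` between `q` and `1/2`, and `logit' (1/2) = 4 = 2 φ(1/2)`,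
concavity of `logit` on `(0, 1/2]` makes `φ` antitone there and bounds below by `2 φ(β)` the
slopes of `logit` between points `x < y ≤ 1/2` with `x ≤ β`. The derivative of
`g = d(·‖q) - φ(β) (· - q)²` is `logit x - logit q - 2 φ(β) (x - q)`, so `g` decreases on
`[0, q]` and increases on `[q, 1/2]`, whence `g ≥ g q = 0` there; on `[1/2, 1]`, `g` dominates
its reflection `g (1 - ·)`.
-/

open Real Set

noncomputable def logit (x : ℝ) : ℝ := log x - log (1 - x)

lemma logit_half : logit (1 / 2) = 0 := by norm_num [logit]

lemma hasDerivAt_logit {x : ℝ} (hx₀ : 0 < x) (hx₁ : x < 1) :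
    HasDerivAt logit (x⁻¹ + (1 - x)⁻¹) x := by
  have h := (hasDerivAt_log hx₀.ne').sub
    (((hasDerivAt_id' x).const_sub 1).log (sub_pos.2 hx₁).ne')
  exact h.congr_deriv (by ring)

lemma concaveOn_logit : ConcaveOn ℝ (Ioc 0 (1 / 2)) logit := by
  have hint : interior (Ioc (0 : ℝ) (1 / 2)) = Ioo 0 (1 / 2) := interior_Ioc
  refine concaveOn_of_hasDerivWithinAt2_nonpos (convex_Ioc 0 (1 / 2))
    (f' := fun x => x⁻¹ + (1 - x)⁻¹) (f'' := fun x => -(x ^ 2)⁻¹ + ((1 - x) ^ 2)⁻¹)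
    (fun x hx => (hasDerivAt_logit hx.1 (by linarith [hx.2])).continuousAt.continuousWithinAt)
    (fun x hx => ?_) (fun x hx => ?_) (fun x hx => ?_) <;> rw [hint] at hx <;>
    obtain ⟨hx₀, hx₁⟩ := hx
  · exact (hasDerivAt_logit hx₀ (by linarith)).hasDerivWithinAt
  · have h := (hasDerivAt_inv hx₀.ne').add
      (((hasDerivAt_id' x).const_sub 1).inv (by linarith : (1 : ℝ) - x ≠ 0))
    exact (h.congr_deriv (by ring)).hasDerivWithinAt
  · have hsq : x ^ 2 ≤ (1 - x) ^ 2 := by nlinarith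
    linarith [inv_anti₀ (by positivity) hsq]

lemma two_mul_phiFun_eq_slope_logit {x : ℝ} (hx₀ : 0 < x) (hx₁ : x < 1 / 2) :
    2 * phiFun x = slope logit x (1 / 2) := by
  rw [phiFun, if_neg hx₁.ne, slope_def_field, logit_half, logit, log_div (by linarith) hx₀.ne']
  field_simp
  ring

lemma phiFun_half : phiFun (1 / 2) = 2 := if_pos rfl

lemma phiFun_antitoneOn : AntitoneOn phiFun (Ioc 0 (1 / 2)) := by
  intro x hx y hy hxy
  rcases hxy.eq_or_lt with rfl | hxy
  · rfl
  have hx₁ : x < 1 / 2 := hxy.trans_le hy.2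
  have hslope := two_mul_phiFun_eq_slope_logit hx.1 hx₁
  rcases hy.2.eq_or_lt with rfl | hy₁
  · have hderiv : HasDerivAt logit 4 (1 / 2) :=
      (hasDerivAt_logit (by norm_num) (by norm_num)).congr_deriv (by norm_num)
    have := concaveOn_logit.le_slope_of_hasDerivAt hx (right_mem_Ioc.2 (by norm_num)) hx₁ hderiv
    rw [phiFun_half]
    linarith
  · have := concaveOn_logit.antitoneOn_slope_lt (right_mem_Ioc.2 (by norm_num : (0 : ℝ) < 1 / 2))
      ⟨hx, hx₁⟩ ⟨hy, hy₁⟩ hxy.le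
    rw [slope_comm logit (1 / 2) x, slope_comm logit (1 / 2) y, ← hslope,
      ← two_mul_phiFun_eq_slope_logit hy.1 hy₁] at this
    linarith

lemma two_mul_phiFun_mul_le_logit_sub {x y β : ℝ} (hx₀ : 0 < x) (hxβ : x ≤ β) (hβ : β ≤ 1 / 2)
    (hxy : x ≤ y) (hy : y ≤ 1 / 2) :
    2 * phiFun β * (y - x) ≤ logit y - logit x := by
  rcases hxy.eq_or_lt with rfl | hxy
  · simp
  have hx₁ : x < 1 / 2 := hxy.trans_le hy
  have hφ : phiFun β ≤ phiFun x :=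
    phiFun_antitoneOn ⟨hx₀, hx₁.le⟩ ⟨hx₀.trans_le hxβ, hβ⟩ hxβ
  have hslope : 2 * phiFun x ≤ slope logit x y := by
    rw [two_mul_phiFun_eq_slope_logit hx₀ hx₁]
    rcases hy.eq_or_lt with rfl | hy₁
    · rfl
    exact concaveOn_logit.antitoneOn_slope_gt ⟨hx₀, hx₁.le⟩ ⟨⟨hx₀.trans hxy, hy⟩, hxy⟩
      ⟨right_mem_Ioc.2 (by norm_num), hx₁⟩ hy
  rw [slope_def_field, le_div_iff₀ (sub_pos.2 hxy)] at hslope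
  nlinarith

noncomputable def binKL (p q : ℝ) : ℝ := p * log (p / q) + (1 - p) * log ((1 - p) / (1 - q))

lemma mul_log_div_eq (x : ℝ) {q : ℝ} (hq : q ≠ 0) : x * log (x / q) = x * log x - x * log q := by
  rcases eq_or_ne x 0 with rfl | hx
  · simp
  · rw [log_div hx hq]
    ring

lemma binKL_eq {q : ℝ} (hq₀ : q ≠ 0) (hq₁ : q ≠ 1) (p : ℝ) :
    binKL p q = p * log p + (1 - p) * log (1 - p) - p * log q - (1 - p) * log (1 - q) := by
  rw [binKL, mul_log_div_eq p hq₀, mul_log_div_eq (1 - p) (sub_ne_zero.2 hq₁.symm)]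
  ring

lemma binKL_one_sub (p q : ℝ) : binKL (1 - p) (1 - q) = binKL p q := by
  rw [binKL, binKL, sub_sub_cancel, sub_sub_cancel]
  ring

lemma binKL_eq_binKL_one_sub {q : ℝ} (hq₀ : q ≠ 0) (hq₁ : q ≠ 1) (p : ℝ) :
    binKL p q = binKL (1 - p) q - (2 * p - 1) * logit q := by
  rw [binKL_eq hq₀ hq₁, binKL_eq hq₀ hq₁, logit, sub_sub_cancel]
  ring

lemma continuous_binKL {q : ℝ} (hq₀ : q ≠ 0) (hq₁ : q ≠ 1) : Continuous fun p => binKL p q := by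
  simp only [binKL_eq hq₀ hq₁]
  have h : Continuous fun x : ℝ => (1 - x) * log (1 - x) :=
    continuous_mul_log.comp (continuous_sub_left 1)
  fun_prop

lemma hasDerivAt_binKL {p q : ℝ} (hq₀ : q ≠ 0) (hq₁ : q ≠ 1) (hp₀ : 0 < p) (hp₁ : p < 1) :
    HasDerivAt (fun x => binKL x q) (logit p - logit q) p := by
  have h := (((hasDerivAt_mul_log hp₀.ne').add ((hasDerivAt_mul_log (sub_pos.2 hp₁).ne').comp p
    ((hasDerivAt_id' p).const_sub 1))).sub ((hasDerivAt_id' p).mul_const (log q))).sub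
    (((hasDerivAt_id' p).const_sub 1).mul_const (log (1 - q)))
  simp only [binKL_eq hq₀ hq₁]
  exact h.congr_deriv (by simp only [logit]; ring)

lemma phiFun_mul_sq_le_binKL_of_le_half {p q β : ℝ} (hq₀ : 0 < q) (hqβ : q ≤ β) (hβ : β ≤ 1 / 2)
    (hp₀ : 0 ≤ p) (hp : p ≤ 1 / 2) : phiFun β * (p - q) ^ 2 ≤ binKL p q := by
  have hq₁ : q < 1 := by linarith
  set c := phiFun β
  set g : ℝ → ℝ := fun x => binKL x q - c * (x - q) ^ 2 with hg
  have hcont : Continuous g := by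
    have := continuous_binKL hq₀.ne' hq₁.ne
    fun_prop
  have hderiv : ∀ x ∈ Ioo 0 1, HasDerivAt g (logit x - logit q - 2 * c * (x - q)) x := by
    intro x ⟨hx₀, hx₁⟩
    have h := (hasDerivAt_binKL hq₀.ne' hq₁.ne hx₀ hx₁).sub
      ((((hasDerivAt_id' x).sub_const q).pow 2).const_mul c)
    exact h.congr_deriv (by ring)
  have hanti : AntitoneOn g (Icc 0 q) := by
    refine antitoneOn_of_deriv_nonpos (convex_Icc 0 q) hcont.continuousOn
      (fun x hx => ?_) (fun x hx => ?_) <;> rw [interior_Icc] at hx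
    · exact (hderiv x ⟨hx.1, hx.2.trans hq₁⟩).differentiableAt.differentiableWithinAt
    · rw [(hderiv x ⟨hx.1, hx.2.trans hq₁⟩).deriv]
      have := two_mul_phiFun_mul_le_logit_sub hx.1 (hx.2.le.trans hqβ) hβ hx.2.le (hqβ.trans hβ)
      linarith
  have hmono : MonotoneOn g (Icc q (1 / 2)) := by
    refine monotoneOn_of_deriv_nonneg (convex_Icc q (1 / 2)) hcont.continuousOn
      (fun x hx => ?_) (fun x hx => ?_) <;> rw [interior_Icc] at hx
    · exact (hderiv x ⟨hq₀.trans hx.1, by linarith [hx.2]⟩).differentiableAt.differentiableWithinAt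
    · rw [(hderiv x ⟨hq₀.trans hx.1, by linarith [hx.2]⟩).deriv]
      have := two_mul_phiFun_mul_le_logit_sub hq₀ hqβ hβ hx.1.le hx.2.le
      linarith
  have hgq : g q = 0 := by
    simp [hg, binKL, div_self hq₀.ne', div_self (sub_pos.2 hq₁).ne']
  suffices 0 ≤ g p by simpa [hg] using this
  rcases le_total p q with h | h
  · exact hgq ▸ hanti ⟨hp₀, h⟩ ⟨hq₀.le, le_rfl⟩ h
  · exact hgq ▸ hmono ⟨le_rfl, hqβ.trans hβ⟩ ⟨h, hp⟩ h

lemma phiFun_mul_sq_le_binKL {p q β : ℝ} (hq₀ : 0 < q) (hqβ : q ≤ β) (hβ : β ≤ 1 / 2)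
    (hp₀ : 0 ≤ p) (hp₁ : p ≤ 1) : phiFun β * (p - q) ^ 2 ≤ binKL p q := by
  rcases le_total p (1 / 2) with hp | hp
  · exact phiFun_mul_sq_le_binKL_of_le_half hq₀ hqβ hβ hp₀ hp
  have hreflect := phiFun_mul_sq_le_binKL_of_le_half hq₀ hqβ hβ (sub_nonneg.2 hp₁)
    (by linarith : 1 - p ≤ 1 / 2)
  have hslope := two_mul_phiFun_mul_le_logit_sub hq₀ hqβ hβ (hqβ.trans hβ) le_rfl
  rw [logit_half] at hslope
  rw [binKL_eq_binKL_one_sub hq₀.ne' (by linarith) p]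
  nlinarith

lemma phiFun_mul_sq_le_binKL_of_min_le {p q β : ℝ} (hq₀ : 0 < q) (hq₁ : q < 1)
    (hqβ : min q (1 - q) ≤ β) (hβ : β ≤ 1 / 2) (hp₀ : 0 ≤ p) (hp₁ : p ≤ 1) :
    phiFun β * (p - q) ^ 2 ≤ binKL p q := by
  rcases le_total q (1 - q) with h | h
  · rw [min_eq_left h] at hqβ
    exact phiFun_mul_sq_le_binKL hq₀ hqβ hβ hp₀ hp₁
  · rw [min_eq_right h] at hqβ
    have := phiFun_mul_sq_le_binKL (p := 1 - p) (sub_pos.2 hq₁) hqβ hβ (by linarith) (by linarith)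
    rwa [binKL_one_sub, show (1 - p - (1 - q)) ^ 2 = (p - q) ^ 2 by ring] at this

lemma mul_log_add_sub_mul_le_mul_log_div {r p t : ℝ} (hr : 0 ≤ r) (hp : 0 < p) (ht : 0 < t) :
    r * log t + r - p * t ≤ r * log (r / p) := by
  rcases hr.eq_or_lt with rfl | hr
  · simpa using mul_pos hp ht |>.le
  calc r * log t + r - p * t = r * log t + r * (1 - (r / p / t)⁻¹) := by
        field_simp
        ring
    _ ≤ r * log t + r * log (r / p / t) := by
        gcongr
        exact one_sub_inv_le_log_of_pos (by positivity)
    _ = r * log (r / p) := by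
        rw [log_div (by positivity) ht.ne']
        ring

lemma mul_log_sum_div_sum_le_sum_mul_log_div {ι : Type*} (s : Finset ι) {r p : ι → ℝ}
    (hr : ∀ i ∈ s, 0 ≤ r i) (hp : ∀ i ∈ s, 0 < p i) :
    (∑ i ∈ s, r i) * log ((∑ i ∈ s, r i) / ∑ i ∈ s, p i) ≤ ∑ i ∈ s, r i * log (r i / p i) := by
  rcases (Finset.sum_nonneg hr).eq_or_lt with ha | ha
  · have hr₀ := (Finset.sum_eq_zero_iff_of_nonneg hr).1 ha.symm
    rw [← ha, zero_mul, Finset.sum_eq_zero fun i hi => by rw [hr₀ i hi, zero_mul]]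
  have hb : 0 < ∑ i ∈ s, p i := Finset.sum_pos hp (Finset.nonempty_of_sum_ne_zero ha.ne')
  have h := Finset.sum_le_sum fun i hi =>
    mul_log_add_sub_mul_le_mul_log_div (hr i hi) (hp i hi) (div_pos ha hb)
  rwa [Finset.sum_sub_distrib, Finset.sum_add_distrib, ← Finset.sum_mul, ← Finset.sum_mul,
    mul_div_cancel₀ _ hb.ne', add_sub_cancel_right] at h

lemma binKL_le_klDiv {𝒳 : Type*} [Fintype 𝒳] {R P : 𝒳 → ℝ} (hR : IsPmf R) (hP : IsPmf P)
    (hPpos : ∀ x, 0 < P x) (A : Finset 𝒳) :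
    binKL (∑ x ∈ A, R x) (∑ x ∈ A, P x) ≤ klDiv R P := by
  classical
  have hcompl (f : 𝒳 → ℝ) (hf : ∑ x, f x = 1) : 1 - ∑ x ∈ A, f x = ∑ x ∈ Aᶜ, f x := by
    rw [← hf, ← Finset.sum_add_sum_compl A f]
    ring
  rw [binKL, hcompl R hR.2, hcompl P hP.2, klDiv, ← Finset.sum_add_sum_compl A]
  exact add_le_add
    (mul_log_sum_div_sum_le_sum_mul_log_div A (fun x _ => hR.1 x) (fun x _ => hPpos x))
    (mul_log_sum_div_sum_le_sum_mul_log_div Aᶜ (fun x _ => hR.1 x) (fun x _ => hPpos x))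

lemma sum_abs_eq_two_mul_sum_filter_pos {ι : Type*} (s : Finset ι) (f : ι → ℝ)
    (hf : ∑ i ∈ s, f i = 0) : ∑ i ∈ s, |f i| = 2 * ∑ i ∈ s with 0 < f i, f i := by
  rw [← Finset.sum_filter_add_sum_filter_not s (fun i => 0 < f i)] at hf ⊢
  have hpos : ∑ i ∈ s with 0 < f i, |f i| = ∑ i ∈ s with 0 < f i, f i :=
    Finset.sum_congr rfl fun i hi => abs_of_pos (Finset.mem_filter.1 hi).2
  have hneg : ∑ i ∈ s with ¬0 < f i, |f i| = -∑ i ∈ s with ¬0 < f i, f i := by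
    rw [← Finset.sum_neg_distrib]
    exact Finset.sum_congr rfl fun i hi => abs_of_nonpos (not_lt.1 (Finset.mem_filter.1 hi).2)
  rw [hpos, hneg]
  linarith

section balSep

variable {𝒳 : Type*} [Fintype 𝒳]

lemma min_le_balSep (P : 𝒳 → ℝ) (A : Finset 𝒳) :
    min (∑ x ∈ A, P x) (1 - ∑ x ∈ A, P x) ≤ balSep P :=
  Finset.le_sup' (fun A => min (∑ x ∈ A, P x) (1 - ∑ x ∈ A, P x))
    (Finset.mem_powerset.2 (Finset.subset_univ A))

lemma balSep_le_half (P : 𝒳 → ℝ) : balSep P ≤ 1 / 2 :=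
  Finset.sup'_le _ _ fun A _ => by
    linarith [min_le_left (∑ x ∈ A, P x) (1 - ∑ x ∈ A, P x),
      min_le_right (∑ x ∈ A, P x) (1 - ∑ x ∈ A, P x)]

lemma balSep_pos {P : 𝒳 → ℝ} (hP : ∑ x, P x = 1) (hPpos : ∀ x, 0 < P x)
    (hcard : 2 ≤ Fintype.card 𝒳) : 0 < balSep P := by
  classical
  obtain ⟨x, y, hxy⟩ := Fintype.exists_pair_of_one_lt_card hcard
  have hsum : P x + P y ≤ 1 := hP ▸ (Finset.sum_pair hxy).symm.le.trans
    (Finset.sum_le_univ_sum_of_nonneg fun z => (hPpos z).le)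
  refine lt_of_lt_of_le ?_ (min_le_balSep P {x})
  rw [Finset.sum_singleton]
  exact lt_min (hPpos x) (by linarith [hPpos y])

end balSep

lemma chiSq_le_sup'_mul_sum_abs {𝒳 : Type*} [Fintype 𝒳] [Nonempty 𝒳] (R P : 𝒳 → ℝ) :
    chiSq R P ≤ Finset.univ.sup' Finset.univ_nonempty (fun x => |(R x - P x) / P x|)
      * ∑ x, |R x - P x| := by
  rw [chiSq, Finset.mul_sum]
  refine Finset.sum_le_sum fun x _ => ?_
  calc (R x - P x) ^ 2 / P x ≤ |(R x - P x) ^ 2 / P x| := le_abs_self _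
    _ = |(R x - P x) / P x| * |R x - P x| := by
        rw [abs_div, abs_div, sq, abs_mul]
        ring
    _ ≤ _ := by
        gcongr
        exact Finset.le_sup' (fun x => |(R x - P x) / P x|) (Finset.mem_univ x)

lemma sum_abs_sub_pos {𝒳 : Type*} [Fintype 𝒳] {R P : 𝒳 → ℝ} (hne : R ≠ P) :
    0 < ∑ x, |R x - P x| := by
  obtain ⟨x₀, hx₀⟩ := Function.ne_iff.1 hne
  exact Finset.sum_pos' (fun x _ => abs_nonneg _)
    ⟨x₀, Finset.mem_univ _, abs_pos.2 (sub_ne_zero.2 hx₀)⟩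

lemma phiFun_balSep_mul_sq_le_four_mul_klDiv {𝒳 : Type*} [Fintype 𝒳] {P R : 𝒳 → ℝ}
    (hP : IsPmf P) (hPpos : ∀ x, 0 < P x) (hR : IsPmf R) :
    phiFun (balSep P) * (∑ x, |R x - P x|) ^ 2 ≤ 4 * klDiv R P := by
  rcases eq_or_ne R P with rfl | hne
  · simp [klDiv, div_self (hPpos _).ne']
  set A := Finset.univ.filter fun x => 0 < R x - P x
  have hN : ∑ x, |R x - P x| = 2 * (∑ x ∈ A, R x - ∑ x ∈ A, P x) := by
    rw [sum_abs_eq_two_mul_sum_filter_pos _ _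
      (by rw [Finset.sum_sub_distrib, hR.2, hP.2, sub_self]), Finset.sum_sub_distrib]
  have hlt : ∑ x ∈ A, P x < ∑ x ∈ A, R x := by
    linarith [sum_abs_sub_pos hne]
  have hA : A.Nonempty := Finset.nonempty_iff_ne_empty.2 fun h => by simp [h] at hlt
  have hb₀ : 0 < ∑ x ∈ A, P x := Finset.sum_pos (fun x _ => hPpos x) hA
  have ha₁ : ∑ x ∈ A, R x ≤ 1 := hR.2 ▸ Finset.sum_le_univ_sum_of_nonneg hR.1
  have hbin := phiFun_mul_sq_le_binKL_of_min_le hb₀ (hlt.trans_le ha₁) (min_le_balSep P A)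
    (balSep_le_half P) (Finset.sum_nonneg fun x _ => hR.1 x) ha₁
  calc phiFun (balSep P) * (∑ x, |R x - P x|) ^ 2
      = 4 * (phiFun (balSep P) * (∑ x ∈ A, R x - ∑ x ∈ A, P x) ^ 2) := by
        rw [hN]
        ring
    _ ≤ 4 * klDiv R P := by linarith [binKL_le_klDiv hR hP hPpos A]

/-- **Lemma 2 (KL Divergence Refined Lower Bound).** -/
theorem kl_divergence_refined_lower_bound
    {𝒳 : Type*} [Fintype 𝒳] [Nonempty 𝒳] (hcard : 2 ≤ Fintype.card 𝒳)
    (P R : 𝒳 → ℝ) (hP : IsPmf P) (hPpos : ∀ x, 0 < P x)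
    (hR : IsPmf R) (hne : R ≠ P) :
    phiFun (balSep P) /
        (4 * Finset.univ.sup' Finset.univ_nonempty (fun x => |(R x - P x) / P x|))
      ≤ klDiv R P / (chiSq R P * ∑ x, |R x - P x|) := by
  set M := Finset.univ.sup' Finset.univ_nonempty (fun x => |(R x - P x) / P x|)
  set N := ∑ x, |R x - P x|
  have hN : 0 < N := sum_abs_sub_pos hne
  obtain ⟨x₀, hx₀⟩ : ∃ x, R x - P x ≠ 0 := by
    simpa only [sub_ne_zero] using Function.ne_iff.1 hne
  have hM : 0 < M := (abs_pos.2 (div_ne_zero hx₀ (hPpos x₀).ne')).trans_le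
    (Finset.le_sup' (fun x => |(R x - P x) / P x|) (Finset.mem_univ x₀))
  have hχ : 0 < chiSq R P := Finset.sum_pos' (fun x _ => div_nonneg (sq_nonneg _) (hPpos x).le)
    ⟨x₀, Finset.mem_univ _, div_pos (sq_pos_of_ne_zero hx₀) (hPpos x₀)⟩
  have hφ : 0 ≤ phiFun (balSep P) := by
    have hβ := balSep_pos hP.2 hPpos hcard
    have := phiFun_antitoneOn ⟨hβ, balSep_le_half P⟩ ⟨by norm_num, le_rfl⟩ (balSep_le_half P)
    linarith [phiFun_half]
  rw [div_le_div_iff₀ (by positivity) (by positivity)]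
  calc phiFun (balSep P) * (chiSq R P * N) ≤ phiFun (balSep P) * (M * N * N) := by
        gcongr
        exact chiSq_le_sup'_mul_sum_abs R P
    _ = M * (phiFun (balSep P) * N ^ 2) := by ring
    _ ≤ M * (4 * klDiv R P) :=
        mul_le_mul_of_nonneg_left (phiFun_balSep_mul_sq_le_four_mul_klDiv hP hPpos hR) hM.le
    _ = klDiv R P * (4 * M) := by ring
end

section
/- (Generalized Pinsker's inequality for f-divergences.) Let f:(0,∞)→ℝ be a convex function with f(1)=0 that is strictly convex at 1, thrice differentiable at 1 with f''(1)>0, and satisfies (f(t) − f'(1)(t−1))·(1 − (f'''(1)/(3f''(1)))(t−1)) ≥ (f''(1)/2)(t−1)² for every t∈(0,∞). Then for all pmfs R, P on 𝒳, D_f(R||P) ≥ (f''(1)/2) · ‖R−P‖₁², where ‖R−P‖₁ = Σ_x |R(x)−P(x)|. -/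
/-- `f` is strictly convex at `1`. -/
def StrictlyConvexAtOne (f : ℝ → ℝ) : Prop :=
  ∀ x y : ℝ, 0 < x → 0 < y → x ≠ y → ∀ l : ℝ, 0 < l → l < 1 →
    l * x + (1 - l) * y = 1 → f 1 < l * f x + (1 - l) * f y

/-- `f(0) := lim_{t→0⁺} f(t)`, as an extended real (the limit exists for convex `f`;
we use a `limsup` to name it). -/
noncomputable def fZero (f : ℝ → ℝ) : EReal :=
  Filter.limsup (fun t : ℝ => ((f t : ℝ) : EReal)) (nhdsWithin 0 (Set.Ioi (0 : ℝ)))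

/-- `lim_{p→0⁺} p f(1/p)`, as an extended real (the limit exists for convex `f`;
we use a `limsup` to name it). This is the constant in the convention
`0 · f(r/0) = r · lim_{p→0⁺} p f(1/p)`. -/
noncomputable def fInftySlope (f : ℝ → ℝ) : EReal :=
  Filter.limsup (fun p : ℝ => ((p * f (1 / p) : ℝ) : EReal))
    (nhdsWithin 0 (Set.Ioi (0 : ℝ)))

/-- Extended-real-valued f-divergence
`D_f(R‖P) = ∑ₓ P(x) f(R(x)/P(x))`, with the conventions `f(0) = lim_{t→0⁺} f(t)`,
`0·f(0/0) = 0`, and `0·f(r/0) = r·lim_{p→0⁺} p f(1/p)`. -/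
noncomputable def fDivE {𝒳 : Type*} [Fintype 𝒳] (f : ℝ → ℝ) (R P : 𝒳 → ℝ) : EReal :=
  ∑ x, if P x = 0 then ((R x : ℝ) : EReal) * fInftySlope f
       else if R x = 0 then ((P x : ℝ) : EReal) * fZero f
       else ((P x * f (R x / P x) : ℝ) : EReal)

open Filter Topology

/-! Write `a = f'(1)`, `b = f'''(1) / (3 f''(1))` and `c = f''(1) / 2`. Since `f` lies above its
tangent at `1`, the hypothesis forces `-1 ≤ b ≤ 0`, and it then reads
`f t ≥ a (t - 1) + c (t - 1)² / (1 - b (t - 1))`. Taking `t = R x / P x` and multiplying by `P x`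
bounds each summand of `D_f(R‖P)` below by `a (R x - P x) + c (R x - P x)² / w x`, where the
weights `w x = (1 + b) P x - b R x` sum to `1`. The conventions for `P x = 0` or `R x = 0` are
limits of this bound; the perspective `p f(1/p)` satisfies the hypothesis with `(a, b)` replaced
by `(-a, -1 - b)`, so `lim p f(1/p)` is handled like `f(0)`. Summing, the linear terms cancel and
Cauchy–Schwarz gives `∑ (R x - P x)² / w x ≥ (∑ |R x - P x|)²`. If some `w x` vanishes while
`R x ≠ P x`, that summand is `+∞`. -/

lemma ConvexOn.add_deriv_mul_sub_le {S : Set ℝ} {f : ℝ → ℝ} (hf : ConvexOn ℝ S f) {x y : ℝ}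
    (hx : x ∈ S) (hy : y ∈ S) (hd : DifferentiableAt ℝ f x) :
    f x + deriv f x * (y - x) ≤ f y := by
  rcases lt_trichotomy y x with hyx | rfl | hxy
  · have := hf.slope_le_deriv hy hx hyx hd
    rw [slope_def_field, div_le_iff₀ (sub_pos.2 hyx)] at this
    linarith
  · simp
  · have := hf.deriv_le_slope hx hy hxy hd
    rw [slope_def_field, le_div_iff₀ (sub_pos.2 hxy)] at this
    linarith

lemma EReal.coe_finset_sum {ι : Type*} (s : Finset ι) (g : ι → ℝ) :
    ((∑ i ∈ s, g i : ℝ) : EReal) = ∑ i ∈ s, (g i : EReal) :=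
  map_sum (⟨⟨Real.toEReal, EReal.coe_zero⟩, EReal.coe_add⟩ : ℝ →+ EReal) g s

lemma EReal.finset_sum_eq_top {ι : Type*} [DecidableEq ι] {s : Finset ι} {g : ι → EReal} {i : ι}
    (hi : i ∈ s) (htop : g i = ⊤) (hne : ∀ j ∈ s, g j ≠ ⊥) : ∑ j ∈ s, g j = ⊤ := by
  rw [← Finset.add_sum_erase s g hi, htop, EReal.top_add_of_ne_bot]
  exact Finset.sum_induction _ (· ≠ ⊥) (fun _ _ ha hb => EReal.add_ne_bot_iff.2 ⟨ha, hb⟩)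
    EReal.zero_ne_bot fun j hj => hne j (Finset.mem_of_mem_erase hj)

lemma sq_sum_abs_le_sum_mul_sum_sq_div {ι : Type*} (s : Finset ι) {d w : ι → ℝ}
    (hw : ∀ i ∈ s, 0 ≤ w i) (hdw : ∀ i ∈ s, w i = 0 → d i = 0) :
    (∑ i ∈ s, |d i|) ^ 2 ≤ (∑ i ∈ s, w i) * ∑ i ∈ s, d i ^ 2 / w i := by
  refine Finset.sum_sq_le_sum_mul_sum_of_sq_le_mul s hw
    (fun i hi => div_nonneg (sq_nonneg _) (hw i hi)) fun i hi => ?_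
  rcases eq_or_ne (w i) 0 with h0 | h0
  · simp [hdw i hi h0]
  · rw [sq_abs, mul_div_cancel₀ _ h0]

lemma one_sub_mul_sub_one_pos_of_mem_Icc {b t : ℝ} (hb : b ∈ Set.Icc (-1) 0) (ht : 0 < t) :
    0 < 1 - b * (t - 1) := by
  nlinarith [mul_nonneg (neg_nonneg.2 hb.2) ht.le, hb.1]

lemma le_fZero_of_tendsto {f φ : ℝ → ℝ} {ℓ : EReal} (hle : ∀ᶠ t in 𝓝[>] 0, φ t ≤ f t)
    (hφ : Tendsto (fun t => (φ t : EReal)) (𝓝[>] 0) (𝓝 ℓ)) : ℓ ≤ fZero f :=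
  hφ.limsup_eq ▸ limsup_le_limsup (hle.mono fun _ ht => EReal.coe_le_coe_iff.2 ht)

lemma fInftySlope_eq_fZero (f : ℝ → ℝ) : fInftySlope f = fZero fun p => p * f (1 / p) := rfl

noncomputable def fDivTerm (f : ℝ → ℝ) (r p : ℝ) : EReal :=
  if p = 0 then (r : EReal) * fInftySlope f
  else if r = 0 then (p : EReal) * fZero f
  else ((p * f (r / p) : ℝ) : EReal)

lemma fDivE_eq_sum_fDivTerm {𝒳 : Type*} [Fintype 𝒳] (f : ℝ → ℝ) (R P : 𝒳 → ℝ) :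
    fDivE f R P = ∑ x, fDivTerm f (R x) (P x) := rfl

def PinskerCondition (f : ℝ → ℝ) (a b c : ℝ) : Prop :=
  ∀ t, 0 < t → c * (t - 1) ^ 2 ≤ (f t - a * (t - 1)) * (1 - b * (t - 1))

namespace PinskerCondition

variable {f : ℝ → ℝ} {a b c : ℝ}

lemma one_sub_mul_sub_one_pos (h : PinskerCondition f a b c) (hc : 0 < c)
    (htan : ∀ t, 0 < t → a * (t - 1) ≤ f t) {t : ℝ} (ht : 0 < t) : 0 < 1 - b * (t - 1) := by
  rcases eq_or_ne t 1 with rfl | ht1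
  · simp
  have hsq : 0 < c * (t - 1) ^ 2 := by positivity [sub_ne_zero.2 ht1]
  exact pos_of_mul_pos_right (hsq.trans_le (h t ht)) (sub_nonneg.2 (htan t ht))

lemma nonpos (h : PinskerCondition f a b c) (hc : 0 < c)
    (htan : ∀ t, 0 < t → a * (t - 1) ≤ f t) : b ≤ 0 := by
  by_contra! hb
  have := h.one_sub_mul_sub_one_pos hc htan (t := 1 + 1 / b) (by positivity)
  field_simp at this
  simp at this

lemma neg_one_le (h : PinskerCondition f a b c) (hc : 0 < c)
    (htan : ∀ t, 0 < t → a * (t - 1) ≤ f t) : -1 ≤ b := by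
  by_contra! hb
  have ht : 0 < 1 + 1 / b := by
    have : -1 < 1 / b := by rw [lt_div_iff_of_neg (by linarith)]; linarith
    linarith
  have := h.one_sub_mul_sub_one_pos hc htan ht
  field_simp [show b ≠ 0 by linarith] at this
  simp at this

lemma perspective (h : PinskerCondition f a b c) :
    PinskerCondition (fun s => s * f (1 / s)) (-a) (-1 - b) c := by
  intro s hs
  have key := mul_le_mul_of_nonneg_left (h (1 / s) (by positivity)) (sq_nonneg s)
  have e1 : s ^ 2 * (c * (1 / s - 1) ^ 2) = c * (s - 1) ^ 2 := by field_simp; ring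
  have e2 : s ^ 2 * ((f (1 / s) - a * (1 / s - 1)) * (1 - b * (1 / s - 1))) =
      (s * f (1 / s) - -a * (s - 1)) * (1 - (-1 - b) * (s - 1)) := by field_simp; ring
  rwa [e1, e2] at key

lemma add_div_le_apply (h : PinskerCondition f a b c) {t : ℝ} (ht : 0 < t)
    (hD : 0 < 1 - b * (t - 1)) :
    a * (t - 1) + c * (t - 1) ^ 2 / (1 - b * (t - 1)) ≤ f t := by
  have := (div_le_iff₀ hD).2 (h t ht)
  linarith

lemma le_fZero (h : PinskerCondition f a b c) (hb : -1 < b) :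
    ((c / (1 + b) - a : ℝ) : EReal) ≤ fZero f := by
  set φ : ℝ → ℝ := fun t => a * (t - 1) + c * (t - 1) ^ 2 / (1 - b * (t - 1))
  have hφ : ContinuousAt φ 0 := by
    fun_prop (disch := norm_num; linarith)
  refine le_fZero_of_tendsto (φ := φ) ?_ ?_
  · filter_upwards [Ioo_mem_nhdsGT (zero_lt_one' ℝ)] with t ⟨ht0, ht1⟩
    exact h.add_div_le_apply ht0 (by nlinarith)
  · convert EReal.tendsto_coe.2 (hφ.tendsto.mono_left nhdsWithin_le_nhds) using 3
    simp only [φ]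
    ring

lemma fZero_eq_top (h : PinskerCondition f a b c) (hc : 0 < c) (hb : b = -1) :
    fZero f = ⊤ := by
  subst hb
  refine top_le_iff.1
    (le_fZero_of_tendsto (φ := fun t => a * (t - 1) + c * (t - 1) ^ 2 / t) ?_ ?_)
  · filter_upwards [self_mem_nhdsWithin] with t (ht : 0 < t)
    simpa using h.add_div_le_apply ht (by simpa using ht)
  · refine EReal.tendsto_coe_nhds_top_iff.2 (Tendsto.add_atTop (C := a * (0 - 1)) ?_ ?_)
    · exact (Continuous.tendsto (by fun_prop) 0).mono_left nhdsWithin_le_nhds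
    · simp_rw [div_eq_mul_inv]
      refine Tendsto.pos_mul_atTop (C := c * (0 - 1) ^ 2) (by simpa using hc) ?_
        tendsto_inv_nhdsGT_zero
      exact (Continuous.tendsto (by fun_prop) 0).mono_left nhdsWithin_le_nhds

lemma le_fInftySlope (h : PinskerCondition f a b c) (hb : b < 0) :
    ((a + c / -b : ℝ) : EReal) ≤ fInftySlope f := by
  have := h.perspective.le_fZero (by linarith)
  rw [fInftySlope_eq_fZero]
  convert this using 3
  ring_nf

lemma fInftySlope_eq_top (h : PinskerCondition f a b c) (hc : 0 < c) (hb : b = 0) :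
    fInftySlope f = ⊤ :=
  h.perspective.fZero_eq_top hc (by rw [hb]; norm_num)

lemma le_fDivTerm (h : PinskerCondition f a b c) (hb0 : b ≤ 0) (hb1 : -1 ≤ b) {r p : ℝ}
    (hr : 0 ≤ r) (hp : 0 ≤ p) (hw : (1 + b) * p - b * r = 0 → r = p) :
    ((a * (r - p) + c * (r - p) ^ 2 / ((1 + b) * p - b * r) : ℝ) : EReal) ≤ fDivTerm f r p := by
  rcases hp.eq_or_lt with rfl | hp <;> rcases hr.eq_or_lt with rfl | hr
  · simp [fDivTerm]
  · have hb : b < 0 := hb0.lt_of_ne fun hb => hr.ne' (hw (by simp [hb]))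
    rw [fDivTerm, if_pos rfl]
    calc ((a * (r - 0) + c * (r - 0) ^ 2 / ((1 + b) * 0 - b * r) : ℝ) : EReal)
        = (r : EReal) * ((a + c / -b : ℝ) : EReal) := by
          rw [← EReal.coe_mul]; congr 1; field_simp [hr.ne', hb.ne]; ring
      _ ≤ _ := mul_le_mul_of_nonneg_left (h.le_fInftySlope hb) (EReal.coe_nonneg.2 hr.le)
  · have hb : -1 < b := hb1.lt_of_ne fun hb => hp.ne (hw (by simp [← hb]))
    rw [fDivTerm, if_neg hp.ne', if_pos rfl]
    calc ((a * (0 - p) + c * (0 - p) ^ 2 / ((1 + b) * p - b * 0) : ℝ) : EReal)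
        = (p : EReal) * ((c / (1 + b) - a : ℝ) : EReal) := by
          rw [← EReal.coe_mul]; congr 1; field_simp [show 1 + b ≠ 0 by linarith]; ring
      _ ≤ _ := mul_le_mul_of_nonneg_left (h.le_fZero hb) (EReal.coe_nonneg.2 hp.le)
  · rw [fDivTerm, if_neg hp.ne', if_neg hr.ne', EReal.coe_le_coe_iff]
    have hD := one_sub_mul_sub_one_pos_of_mem_Icc ⟨hb1, hb0⟩ (div_pos hr hp)
    have key := mul_le_mul_of_nonneg_left (h.add_div_le_apply (by positivity) hD) hp.le
    have hw' : (1 + b) * p - b * r = p * (1 - b * (r / p - 1)) := by field_simp; ring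
    refine le_of_eq_of_le ?_ key
    rw [hw']
    field_simp [hD.ne']

lemma fDivTerm_eq_top (h : PinskerCondition f a b c) (hc : 0 < c) (hb0 : b ≤ 0) (hb1 : -1 ≤ b)
    {r p : ℝ} (hr : 0 ≤ r) (hp : 0 ≤ p) (hw : (1 + b) * p - b * r = 0) (hrp : r ≠ p) :
    fDivTerm f r p = ⊤ := by
  have hbp : (1 + b) * p = 0 := by nlinarith [mul_nonneg (by linarith : 0 ≤ 1 + b) hp]
  rcases hp.eq_or_lt with rfl | hp
  · have hr : 0 < r := hr.lt_of_ne' hrp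
    have hb : b = 0 := by nlinarith
    rw [fDivTerm, if_pos rfl, h.fInftySlope_eq_top hc hb, EReal.coe_mul_top_of_pos hr]
  · have hb : b = -1 := by nlinarith
    have hr : r = 0 := by subst hb; nlinarith
    rw [fDivTerm, if_neg hp.ne', if_pos hr, h.fZero_eq_top hc hb, EReal.coe_mul_top_of_pos hp]

lemma fDivTerm_ne_bot (h : PinskerCondition f a b c) (hc : 0 < c) (hb0 : b ≤ 0) (hb1 : -1 ≤ b)
    {r p : ℝ} (hr : 0 ≤ r) (hp : 0 ≤ p) : fDivTerm f r p ≠ ⊥ := by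
  by_cases hw : (1 + b) * p - b * r = 0 ∧ r ≠ p
  · simp [h.fDivTerm_eq_top hc hb0 hb1 hr hp hw.1 hw.2]
  · push Not at hw
    exact ne_bot_of_le_ne_bot (EReal.coe_ne_bot _) (h.le_fDivTerm hb0 hb1 hr hp hw)

end PinskerCondition

lemma IsPmf.mul_sq_sum_abs_sub_le {𝒳 : Type*} [Fintype 𝒳] {R P : 𝒳 → ℝ} (hR : IsPmf R)
    (hP : IsPmf P) {b c : ℝ} (a : ℝ) (hc : 0 ≤ c) (hb0 : b ≤ 0) (hb1 : -1 ≤ b)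
    (hw : ∀ x, (1 + b) * P x - b * R x = 0 → R x = P x) :
    c * (∑ x, |R x - P x|) ^ 2 ≤
      ∑ x, (a * (R x - P x) + c * (R x - P x) ^ 2 / ((1 + b) * P x - b * R x)) := by
  have hsum : ∑ x, ((1 + b) * P x - b * R x) = 1 := by
    rw [Finset.sum_sub_distrib, ← Finset.mul_sum, ← Finset.mul_sum, hR.2, hP.2]; ring
  have hCS := sq_sum_abs_le_sum_mul_sum_sq_div Finset.univ (d := fun x => R x - P x)
    (fun x _ => by nlinarith [hR.1 x, hP.1 x]) fun x _ hx => sub_eq_zero.2 (hw x hx)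
  rw [hsum, one_mul] at hCS
  simp only [mul_div_assoc, Finset.sum_add_distrib, ← Finset.mul_sum, Finset.sum_sub_distrib, hR.2,
    hP.2, sub_self, mul_zero, zero_add]
  exact mul_le_mul_of_nonneg_left hCS hc

theorem generalized_pinsker_general
    {𝒳 : Type*} [Fintype 𝒳]
    (f : ℝ → ℝ)
    (hconv : ConvexOn ℝ (Set.Ioi (0 : ℝ)) f)
    (hf1 : f 1 = 0)
    (hd1 : DifferentiableAt ℝ f 1)
    (hf2pos : 0 < deriv (deriv f) 1)
    (hcond : ∀ t : ℝ, 0 < t →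
      deriv (deriv f) 1 / 2 * (t - 1) ^ 2 ≤
        (f t - deriv f 1 * (t - 1)) *
          (1 - deriv (deriv (deriv f)) 1 / (3 * deriv (deriv f) 1) * (t - 1)))
    (R P : 𝒳 → ℝ) (hR : IsPmf R) (hP : IsPmf P) :
    ((deriv (deriv f) 1 / 2 * (∑ x, |R x - P x|) ^ 2 : ℝ) : EReal)
      ≤ fDivE f R P := by
  classical
  set b := deriv (deriv (deriv f)) 1 / (3 * deriv (deriv f) 1)
  set c := deriv (deriv f) 1 / 2
  have h : PinskerCondition f (deriv f 1) b c := hcond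
  have hc : 0 < c := half_pos hf2pos
  have htan : ∀ t, 0 < t → deriv f 1 * (t - 1) ≤ f t := fun t ht => by
    simpa [hf1] using hconv.add_deriv_mul_sub_le (Set.mem_Ioi.2 one_pos) ht hd1
  have hb0 := h.nonpos hc htan
  have hb1 := h.neg_one_le hc htan
  rw [fDivE_eq_sum_fDivTerm]
  by_cases hdeg : ∃ x, (1 + b) * P x - b * R x = 0 ∧ R x ≠ P x
  · obtain ⟨x, hw, hRP⟩ := hdeg
    rw [EReal.finset_sum_eq_top (Finset.mem_univ x)
      (h.fDivTerm_eq_top hc hb0 hb1 (hR.1 x) (hP.1 x) hw hRP)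
      fun y _ => h.fDivTerm_ne_bot hc hb0 hb1 (hR.1 y) (hP.1 y)]
    exact le_top
  push Not at hdeg
  calc ((c * (∑ x, |R x - P x|) ^ 2 : ℝ) : EReal)
      ≤ ((∑ x, (deriv f 1 * (R x - P x) + c * (R x - P x) ^ 2 / ((1 + b) * P x - b * R x)) : ℝ) :
          EReal) := EReal.coe_le_coe_iff.2 (hR.mul_sq_sum_abs_sub_le hP _ hc.le hb0 hb1 hdeg)
    _ = _ := EReal.coe_finset_sum _ _
    _ ≤ _ := Finset.sum_le_sum fun x _ =>
      h.le_fDivTerm hb0 hb1 (hR.1 x) (hP.1 x) (hdeg x)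

/-- **Lemma 4 (Generalized Pinsker's Inequality for f-Divergences).** -/
theorem generalized_pinsker
    {𝒳 : Type*} [Fintype 𝒳] (hcard : 2 ≤ Fintype.card 𝒳)
    (f : ℝ → ℝ)
    (hconv : ConvexOn ℝ (Set.Ioi (0 : ℝ)) f)
    (hstrict : StrictlyConvexAtOne f)
    (hf1 : f 1 = 0)
    (hd1 : DifferentiableAt ℝ f 1)
    (hd2 : DifferentiableAt ℝ (deriv f) 1)
    (hd3 : DifferentiableAt ℝ (deriv (deriv f)) 1)
    (hf2pos : 0 < deriv (deriv f) 1)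
    (hcond : ∀ t : ℝ, 0 < t →
      deriv (deriv f) 1 / 2 * (t - 1) ^ 2 ≤
        (f t - deriv f 1 * (t - 1)) *
          (1 - deriv (deriv (deriv f)) 1 / (3 * deriv (deriv f) 1) * (t - 1)))
    (R P : 𝒳 → ℝ) (hR : IsPmf R) (hP : IsPmf P) :
    ((deriv (deriv f) 1 / 2 * (∑ x, |R x - P x|) ^ 2 : ℝ) : EReal)
      ≤ fDivE f R P :=
  generalized_pinsker_general f hconv hf1 hd1 hf2pos hcond R P hR hP
end
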